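/- arXiv:2304.00809 — 5 statements merged into one kernel-verified Lean document; each statement's English description precedes it below -/
import Mathlib

section
/- Let X_1,...,X_n, Y be i.i.d. random variables valued in X, let X = (X_1,...,X_n) and X' = (Y, X_2,...,X_n), and let A ⊆ X^n be a measurable set invariant under permutations of coordinates. Then P(X ∈ A and X' ∉ A) ≤ P(X ∈ A) · P(X ∉ A). -/
/-!
Write `X = (X₁, Z)` with `Z = (X₂, …, Xₙ)` and let `g z = P((X₁, z) ∈ A)`. Given `Z`, the events
`X ∈ A` and `X' ∉ A` are independent with probabilities `g Z` and `1 - g Z`, so the left side is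
`E[g Z (1 - g Z)]`, while the right side is `E[g Z] (1 - E[g Z])`. The difference is `Var (g Z) ≥ 0`.
-/

open MeasureTheory ENNReal

section LintegralVariance

variable {Ω : Type*} [MeasurableSpace Ω] {ν : Measure Ω} [IsProbabilityMeasure ν] {f : Ω → ℝ≥0∞}

lemma sq_lintegral_le_lintegral_sq (hf : AEMeasurable f ν) :
    (∫⁻ z, f z ∂ν) ^ 2 ≤ ∫⁻ z, f z ^ 2 ∂ν := by
  have h := ENNReal.lintegral_mul_le_Lp_mul_Lq ν Real.HolderConjugate.two_two hf
    (aemeasurable_const (b := (1 : ℝ≥0∞)))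
  simp only [Pi.mul_apply, mul_one, one_pow, one_rpow, lintegral_const, measure_univ, rpow_two,
    one_div] at h
  rw [← rpow_two]
  exact (le_rpow_inv_iff two_pos).1 h

lemma lintegral_mul_one_sub_le (hf : Measurable f) (hf1 : ∀ z, f z ≤ 1) :
    ∫⁻ z, f z * (1 - f z) ∂ν ≤ (∫⁻ z, f z ∂ν) * (1 - ∫⁻ z, f z ∂ν) := by
  have hint1 : ∫⁻ z, f z ∂ν ≤ 1 := (lintegral_mono hf1).trans (by simp)
  have hsq_le : ∀ z, f z ^ 2 ≤ f z := fun z => by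
    simpa [sq] using mul_le_of_le_one_left' (hf1 z)
  have hsq_fin : ∫⁻ z, f z ^ 2 ∂ν ≠ ∞ :=
    ne_top_of_le_ne_top one_ne_top ((lintegral_mono hsq_le).trans hint1)
  calc ∫⁻ z, f z * (1 - f z) ∂ν = ∫⁻ z, f z - f z ^ 2 ∂ν := by
        simp_rw [ENNReal.mul_sub fun _ _ => ne_top_of_le_ne_top one_ne_top (hf1 _), mul_one, sq]
    _ = ∫⁻ z, f z ∂ν - ∫⁻ z, f z ^ 2 ∂ν :=
        lintegral_sub (hf.pow_const 2) hsq_fin (ae_of_all _ hsq_le)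
    _ ≤ ∫⁻ z, f z ∂ν - (∫⁻ z, f z ∂ν) ^ 2 :=
        tsub_le_tsub_left (sq_lintegral_le_lintegral_sq hf.aemeasurable) _
    _ = (∫⁻ z, f z ∂ν) * (1 - ∫⁻ z, f z ∂ν) := by
        rw [ENNReal.mul_sub fun _ _ => ne_top_of_le_ne_top one_ne_top hint1, mul_one, sq]

end LintegralVariance

section Resampling

variable {X Z : Type*} [MeasurableSpace X] [MeasurableSpace Z] (μ : Measure X)
  [IsProbabilityMeasure μ] (ν : Measure Z) {B : Set (X × Z)}

lemma prod_resample_fst_eq_lintegral [SFinite ν] (hB : MeasurableSet B) :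
    ((μ.prod ν).prod μ) {q | q.1 ∈ B ∧ (q.2, q.1.2) ∉ B} =
      ∫⁻ z, μ ((·, z) ⁻¹' B) * (1 - μ ((·, z) ⁻¹' B)) ∂ν := by
  -- reorder `((x, z), y)` as `(z, (x, y))`: the section at `z` is then a product set
  let S : Set (Z × X × X) := {p | (p.2.1, p.1) ∈ B ∧ (p.2.2, p.1) ∉ B}
  have hS : MeasurableSet S :=
    ((measurable_fst.comp measurable_snd).prodMk measurable_fst hB).inter
      ((measurable_snd.comp measurable_snd).prodMk measurable_fst hB).compl
  have hT : MeasurePreserving (MeasurableEquiv.prodAssoc ∘ Prod.map Prod.swap id)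
      ((μ.prod ν).prod μ) (ν.prod (μ.prod μ)) :=
    (measurePreserving_prodAssoc ν μ μ).comp
      (Measure.measurePreserving_swap.prod (MeasurePreserving.id μ))
  rw [show {q : (X × Z) × X | q.1 ∈ B ∧ (q.2, q.1.2) ∉ B} =
      (MeasurableEquiv.prodAssoc ∘ Prod.map Prod.swap id) ⁻¹' S from rfl,
    hT.measure_preimage hS.nullMeasurableSet, Measure.prod_apply hS]
  refine lintegral_congr fun z => ?_
  rw [show Prod.mk z ⁻¹' S = ((·, z) ⁻¹' B) ×ˢ ((·, z) ⁻¹' B)ᶜ from rfl, Measure.prod_prod,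
    prob_compl_eq_one_sub (measurable_prodMk_right hB)]

lemma prod_resample_fst_le [IsProbabilityMeasure ν] (hB : MeasurableSet B) :
    ((μ.prod ν).prod μ) {q | q.1 ∈ B ∧ (q.2, q.1.2) ∉ B} ≤ (μ.prod ν) B * (μ.prod ν) Bᶜ := by
  rw [prod_resample_fst_eq_lintegral μ ν hB, prob_compl_eq_one_sub hB,
    Measure.prod_apply_symm hB]
  exact lintegral_mul_one_sub_le (measurable_measure_prodMk_right hB) fun _ => prob_le_one

end Resampling

lemma piFinSuccAbove_update_zero {X : Type*} [MeasurableSpace X] {m : ℕ} (x : Fin (m + 1) → X)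
    (y : X) :
    (MeasurableEquiv.piFinSuccAbove (fun _ => X) 0).symm
      (y, (MeasurableEquiv.piFinSuccAbove (fun _ => X) 0 x).2) = Function.update x 0 y := by
  conv_rhs => rw [← Fin.cons_self_tail x, Fin.update_cons_zero]
  simp [Fin.insertNthEquiv]

theorem stmt_3_general {X : Type*} [MeasurableSpace X] (μ : Measure X) [IsProbabilityMeasure μ]
    (n : ℕ) (hn : 0 < n) (A : Set (Fin n → X)) (hA : MeasurableSet A) :
    ((Measure.pi fun _ : Fin n => μ).prod μ)
        {p : (Fin n → X) × X | p.1 ∈ A ∧ Function.update p.1 ⟨0, hn⟩ p.2 ∉ A} ≤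
      (Measure.pi fun _ : Fin n => μ) A * (Measure.pi fun _ : Fin n => μ) Aᶜ := by
  obtain _ | m := n
  · exact absurd hn (lt_irrefl 0)
  set e := MeasurableEquiv.piFinSuccAbove (fun _ : Fin (m + 1) => X) 0
  have he : MeasurePreserving e (Measure.pi fun _ => μ) (μ.prod (Measure.pi fun _ : Fin m => μ)) :=
    measurePreserving_piFinSuccAbove (fun _ => μ) 0
  have hset : {p : (Fin (m + 1) → X) × X | p.1 ∈ A ∧ Function.update p.1 ⟨0, hn⟩ p.2 ∉ A} =
      e.prodCongr (.refl X) ⁻¹' {q | q.1 ∈ e.symm ⁻¹' A ∧ (q.2, q.1.2) ∉ e.symm ⁻¹' A} := by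
    ext ⟨x, y⟩
    show x ∈ A ∧ Function.update x 0 y ∉ A ↔ e.symm (e x) ∈ A ∧ e.symm (y, (e x).2) ∉ A
    simp only [e, MeasurableEquiv.symm_apply_apply, piFinSuccAbove_update_zero]
  rw [hset, (he.prod (.id μ)).measure_preimage_equiv, ← (he.symm e).measure_preimage_equiv A,
    ← (he.symm e).measure_preimage_equiv Aᶜ]
  exact prod_resample_fst_le μ _ (e.symm.measurable hA)

theorem stmt_3 {X : Type*} [MeasurableSpace X] (μ : Measure X) [IsProbabilityMeasure μ]
    (n : ℕ) (hn : 0 < n) (A : Set (Fin n → X)) (hA : MeasurableSet A)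
    (hperm : ∀ σ : Equiv.Perm (Fin n), ∀ x : Fin n → X, x ∈ A ↔ (x ∘ σ) ∈ A) :
    ((Measure.pi fun _ : Fin n => μ).prod μ)
        {p : (Fin n → X) × X | p.1 ∈ A ∧ Function.update p.1 ⟨0, hn⟩ p.2 ∉ A} ≤
      (Measure.pi fun _ : Fin n => μ) A * (Measure.pi fun _ : Fin n => μ) Aᶜ :=
  stmt_3_general μ n hn A hA
end

section
/- Suppose the risk J satisfies the error bound τ·ϑ(φ, S)^β ≤ J(φ) − J_* for all φ in the sublevel set [J ≤ J₀], where S = argmin J and J_* = min J. If φ̂ minimizes the empirical risk Ĵ = f̂ + R (with J = f + R), J(φ̂) ≤ J₀, and the quadruple inequality l(φ,x) − l(ψ,x) − l(φ,y) + l(ψ,y) ≤ a(x,y)·ϑ(φ,ψ)^α holds, then τ·ϑ(φ̂, S)^{β−α} ≤ (1/n) Σᵢ E_Y[a(Y, Xᵢ)]. -/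
/-!
For every minimiser `ψ ∈ S`, the basic inequality of empirical risk minimisation bounds
`J(φ̂) - J(ψ)` by the deviation `(f - f̂)(φ̂) - (f - f̂)(ψ)`. Integrating the quadruple inequality
in its first variable bounds this deviation by `A · ϑ(φ̂, ψ)^α`, with
`A = (1/n) Σᵢ E_Y[a(Y, Xᵢ)]`. Combined with the error bound this gives
`τ · ϑ(φ̂, S)^β ≤ A · ϑ(φ̂, ψ)^α`; passing to the infimum over `ψ ∈ S` and dividing by
`ϑ(φ̂, S)^α` gives the claim.
-/

open MeasureTheory Metric Filter Topology

section Deviation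

variable {𝕏 : Type*} [MeasurableSpace 𝕏] {μ : Measure 𝕏} [IsProbabilityMeasure μ]

lemma integral_sub_integral_sub_le_integral_mul {g h a : 𝕏 → ℝ} {z : 𝕏} {c : ℝ}
    (hg : Integrable g μ) (hh : Integrable h μ) (ha : Integrable a μ)
    (hq : ∀ y, g y - h y - g z + h z ≤ a y * c) :
    (∫ y, g y ∂μ - ∫ y, h y ∂μ) - (g z - h z) ≤ (∫ y, a y ∂μ) * c := by
  have hgh : Integrable (fun y => g y - h y) μ := hg.sub hh
  calc (∫ y, g y ∂μ - ∫ y, h y ∂μ) - (g z - h z)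
      = ∫ y, (g y - h y - (g z - h z)) ∂μ := by
        rw [integral_sub hgh (integrable_const _), integral_sub hg hh, integral_const,
          probReal_univ, one_smul]
    _ ≤ ∫ y, a y * c ∂μ :=
        integral_mono (hgh.sub (integrable_const _)) (ha.mul_const c) fun y => by linarith [hq y]
    _ = (∫ y, a y ∂μ) * c := integral_mul_const c a

lemma integral_sub_average_le {n : ℕ} (hn : 0 < n) (x : Fin n → 𝕏) {g h : 𝕏 → ℝ}
    {a : 𝕏 → 𝕏 → ℝ} {c : ℝ} (hg : Integrable g μ) (hh : Integrable h μ)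
    (ha : ∀ i, Integrable (fun y => a y (x i)) μ)
    (hq : ∀ y z, g y - h y - g z + h z ≤ a y z * c) :
    (∫ y, g y ∂μ - ∫ y, h y ∂μ) - ((1 : ℝ) / n * ∑ i, g (x i) - (1 : ℝ) / n * ∑ i, h (x i)) ≤
      ((1 : ℝ) / n * ∑ i, ∫ y, a y (x i) ∂μ) * c := by
  have hn' : (n : ℝ) ≠ 0 := Nat.cast_ne_zero.mpr hn.ne'
  have hsum := Finset.sum_le_sum fun i (_ : i ∈ Finset.univ) =>
    integral_sub_integral_sub_le_integral_mul hg hh (ha i) fun y => hq y (x i)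
  rw [Finset.sum_sub_distrib, Finset.sum_const, Finset.card_univ, Fintype.card_fin,
    nsmul_eq_mul, Finset.sum_sub_distrib, ← Finset.sum_mul] at hsum
  calc (∫ y, g y ∂μ - ∫ y, h y ∂μ) - ((1 : ℝ) / n * ∑ i, g (x i) - (1 : ℝ) / n * ∑ i, h (x i))
      = 1 / n * (n * (∫ y, g y ∂μ - ∫ y, h y ∂μ) - (∑ i, g (x i) - ∑ i, h (x i))) := by
        rw [mul_sub, ← mul_assoc, one_div_mul_cancel hn', one_mul, mul_sub]
    _ ≤ 1 / n * ((∑ i, ∫ y, a y (x i) ∂μ) * c) := by gcongr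
    _ = ((1 : ℝ) / n * ∑ i, ∫ y, a y (x i) ∂μ) * c := (mul_assoc _ _ _).symm

end Deviation

lemma le_mul_infDist_rpow {X : Type*} [PseudoMetricSpace X] {s : Set X} (hs : s.Nonempty)
    {x : X} {c A α : ℝ} (hA : 0 ≤ A) (hα : 0 ≤ α) (h : ∀ y ∈ s, c ≤ A * dist x y ^ α) :
    c ≤ A * infDist x s ^ α := by
  have hcont : Tendsto (fun t : ℝ => A * t ^ α) (𝓝[>] (infDist x s))
      (𝓝 (A * infDist x s ^ α)) :=
    (continuousAt_const.mul (Real.continuousAt_rpow_const _ α (Or.inr hα))).tendsto.mono_left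
      nhdsWithin_le_nhds
  refine ge_of_tendsto hcont (eventually_nhdsWithin_of_forall fun t ht => ?_)
  obtain ⟨y, hy, hxy⟩ := (infDist_lt_iff hs).mp ht
  exact (h y hy).trans <|
    mul_le_mul_of_nonneg_left (Real.rpow_le_rpow dist_nonneg hxy.le hα) hA

lemma mul_rpow_sub_le_of_mul_rpow_le {τ A d α β : ℝ} (hd : 0 ≤ d) (hA : 0 ≤ A) (hαβ : α < β)
    (h : τ * d ^ β ≤ A * d ^ α) : τ * d ^ (β - α) ≤ A := by
  rcases hd.eq_or_lt with rfl | hd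
  · rwa [Real.zero_rpow (sub_pos.mpr hαβ).ne', mul_zero]
  · refine le_of_mul_le_mul_right ?_ (Real.rpow_pos_of_pos hd α)
    rwa [mul_assoc, ← Real.rpow_add hd, sub_add_cancel]

theorem stmt_7_general {M 𝕏 : Type*} [MetricSpace M] [MeasurableSpace 𝕏]
    (μ : Measure 𝕏) [IsProbabilityMeasure μ]
    (l : M → 𝕏 → ℝ) (hl : ∀ φ, Integrable (l φ) μ)
    (R : M → ℝ) (n : ℕ) (hn : 0 < n) (x : Fin n → 𝕏)
    (α β τ J₀ : ℝ) (hα : 0 < α) (hαβ : α < β)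
    (a : 𝕏 → 𝕏 → ℝ) (hanneg : ∀ y z, 0 ≤ a y z)
    (ha : ∀ i, Integrable (fun y => a y (x i)) μ)
    (S : Set M)
    (hS : S = {φ | ∀ ψ, (∫ z, l φ z ∂μ) + R φ ≤ (∫ z, l ψ z ∂μ) + R ψ})
    (φstar : M) (hφstar : φstar ∈ S)
    (herr : ∀ φ : M, (∫ z, l φ z ∂μ) + R φ ≤ J₀ →
      τ * infDist φ S ^ β ≤ ((∫ z, l φ z ∂μ) + R φ) - ((∫ z, l φstar z ∂μ) + R φstar))
    (φhat : M)
    (hmin : ∀ ψ, ((1 : ℝ) / n) * ∑ i, l φhat (x i) + R φhat ≤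
      ((1 : ℝ) / n) * ∑ i, l ψ (x i) + R ψ)
    (hlevel : (∫ z, l φhat z ∂μ) + R φhat ≤ J₀)
    (hquad : ∀ φ ψ : M, ∀ y z : 𝕏,
      l φ y - l ψ y - l φ z + l ψ z ≤ a y z * dist φ ψ ^ α) :
    τ * infDist φhat S ^ (β - α) ≤ ((1 : ℝ) / n) * ∑ i, ∫ y, a y (x i) ∂μ := by
  have hA : 0 ≤ (1 : ℝ) / n * ∑ i, ∫ y, a y (x i) ∂μ :=
    mul_nonneg (by positivity) <|
      Finset.sum_nonneg fun i _ => integral_nonneg fun y => hanneg y (x i)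
  have key : ∀ ψ ∈ S, τ * infDist φhat S ^ β ≤
      ((1 : ℝ) / n * ∑ i, ∫ y, a y (x i) ∂μ) * dist φhat ψ ^ α := by
    intro ψ hψ
    rw [hS] at hψ
    have hdev := integral_sub_average_le hn x (hl φhat) (hl ψ) ha (hquad φhat ψ)
    linarith [herr φhat hlevel, hψ φstar, hmin ψ]
  exact mul_rpow_sub_le_of_mul_rpow_le infDist_nonneg hA hαβ <|
    le_mul_infDist_rpow ⟨φstar, hφstar⟩ hA hα.le key

theorem stmt_7 {M 𝕏 : Type*} [MetricSpace M] [MeasurableSpace 𝕏]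
    (μ : Measure 𝕏) [IsProbabilityMeasure μ]
    (l : M → 𝕏 → ℝ) (hl : ∀ φ, Integrable (l φ) μ)
    (R : M → ℝ) (n : ℕ) (hn : 0 < n) (x : Fin n → 𝕏)
    (α β τ J₀ : ℝ) (hα : 0 < α) (hαβ : α < β) (hτ : 0 < τ)
    (a : 𝕏 → 𝕏 → ℝ) (hanneg : ∀ y z, 0 ≤ a y z)
    (ha : ∀ i, Integrable (fun y => a y (x i)) μ)
    (S : Set M)
    (hS : S = {φ | ∀ ψ, (∫ z, l φ z ∂μ) + R φ ≤ (∫ z, l ψ z ∂μ) + R ψ})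
    (φstar : M) (hφstar : φstar ∈ S)
    (herr : ∀ φ : M, (∫ z, l φ z ∂μ) + R φ ≤ J₀ →
      τ * infDist φ S ^ β ≤ ((∫ z, l φ z ∂μ) + R φ) - ((∫ z, l φstar z ∂μ) + R φstar))
    (φhat : M)
    (hmin : ∀ ψ, ((1 : ℝ) / n) * ∑ i, l φhat (x i) + R φhat ≤
      ((1 : ℝ) / n) * ∑ i, l ψ (x i) + R ψ)
    (hlevel : (∫ z, l φhat z ∂μ) + R φhat ≤ J₀)
    (hquad : ∀ φ ψ : M, ∀ y z : 𝕏,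
      l φ y - l ψ y - l φ z + l ψ z ≤ a y z * dist φ ψ ^ α) :
    τ * infDist φhat S ^ (β - α) ≤ ((1 : ℝ) / n) * ∑ i, ∫ y, a y (x i) ∂μ :=
  stmt_7_general μ l hl R n hn x α β τ J₀ hα hαβ a hanneg ha S hS φstar hφstar herr φhat hmin hlevel
    hquad
end

section
/- Let A = Cov(ν) be the covariance matrix of ν on R^d with eigenvalues λ1 ≥ ... ≥ λd and top eigenvector set S = {±u1}. Then for every ψ ∈ S^{d−1}, (4/π²)(λ1 − λ2)·ϑ(ψ, S)² ≤ J(ψ) − J_*, where J(ψ) = −⟨Aψ, ψ⟩, J_* = −λ1, and ϑ(ψ, S) = arccos|⟨ψ, u1⟩|. -/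
/-!
Expand `ψ` in the orthonormal eigenbasis: with `cᵢ = ⟨uᵢ, ψ⟩` we have `∑ cᵢ² = 1` and
`λ₁ - ⟨Aψ, ψ⟩ = ∑ (λ₁ - λᵢ) cᵢ² ≥ (λ₁ - λ₂)(1 - c₁²)`. Since `1 - c₁² = sin² ϑ` for
`ϑ = arccos |c₁| ∈ [0, π/2]`, Jordan's inequality `sin ϑ ≥ 2ϑ/π` finishes the proof.
-/

open Matrix Real

theorem four_div_pi_sq_mul_arccos_sq_le {x : ℝ} (hx₀ : 0 ≤ x) (hx₁ : x ≤ 1) :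
    4 / π ^ 2 * arccos x ^ 2 ≤ 1 - x ^ 2 := by
  have hjordan : 2 / π * arccos x ≤ sin (arccos x) :=
    mul_le_sin (arccos_nonneg x) (arccos_le_pi_div_two.mpr hx₀)
  calc 4 / π ^ 2 * arccos x ^ 2 = (2 / π * arccos x) ^ 2 := by ring
    _ ≤ sin (arccos x) ^ 2 := pow_le_pow_left₀ (by positivity [arccos_nonneg x]) hjordan 2
    _ = 1 - x ^ 2 := by rw [sin_sq, cos_arccos (by linarith) hx₁]

theorem sub_mul_one_sub_le_sub_sum_mul {ι : Type*} [Fintype ι] {lam w : ι → ℝ} {i₀ : ι} {μ : ℝ}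
    (hw : ∀ i, 0 ≤ w i) (hw₁ : ∑ i, w i = 1) (hμ : ∀ i ≠ i₀, lam i ≤ μ) :
    (lam i₀ - μ) * (1 - w i₀) ≤ lam i₀ - ∑ i, lam i * w i := by
  classical
  have hrest : 1 - w i₀ = ∑ i ∈ Finset.univ.erase i₀, w i := by
    rw [← hw₁, Finset.sum_erase_eq_sub (Finset.mem_univ i₀)]
  have hgap : lam i₀ - ∑ i, lam i * w i = ∑ i ∈ Finset.univ.erase i₀, (lam i₀ - lam i) * w i := by
    rw [Finset.sum_erase _ (by ring), Finset.sum_congr rfl fun i _ => sub_mul _ _ _,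
      Finset.sum_sub_distrib, ← Finset.mul_sum, hw₁, mul_one]
  rw [hrest, hgap, Finset.mul_sum]
  refine Finset.sum_le_sum fun i hi => mul_le_mul_of_nonneg_right ?_ (hw i)
  linarith [hμ i (Finset.ne_of_mem_erase hi)]

section OrthonormalEigenbasis

variable {n : Type*} [Fintype n] [DecidableEq n] {u : n → n → ℝ}

theorem transpose_of_mul_of_eq_one (hortho : ∀ i j, u i ⬝ᵥ u j = if i = j then (1 : ℝ) else 0) :
    (of u)ᵀ * of u = 1 := by
  refine mul_eq_one_comm.mp (ext fun i j => ?_)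
  simpa [mul_apply, one_apply, dotProduct] using hortho i j

theorem dotProduct_mulVec_eq_sum_mul_sq (hortho : ∀ i j, u i ⬝ᵥ u j = if i = j then (1 : ℝ) else 0)
    {A : Matrix n n ℝ} {lam : n → ℝ} (heig : ∀ i, A *ᵥ u i = lam i • u i) (ψ : n → ℝ) :
    ψ ⬝ᵥ A *ᵥ ψ = ∑ i, lam i * (u i ⬝ᵥ ψ) ^ 2 := by
  have hdiag : A * (of u)ᵀ = (of u)ᵀ * diagonal lam := by
    ext k i
    have hk := congrFun (heig i) k
    simp only [mulVec, dotProduct, Pi.smul_apply, smul_eq_mul] at hk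
    rw [mul_diagonal, mul_apply]
    simpa [mul_comm] using hk
  have hψ : (of u)ᵀ *ᵥ (of u *ᵥ ψ) = ψ := by
    rw [mulVec_mulVec, transpose_of_mul_of_eq_one hortho, one_mulVec]
  calc ψ ⬝ᵥ A *ᵥ ψ = ψ ⬝ᵥ (A * (of u)ᵀ) *ᵥ (of u *ᵥ ψ) := by rw [← mulVec_mulVec, hψ]
    _ = (of u *ᵥ ψ) ⬝ᵥ diagonal lam *ᵥ (of u *ᵥ ψ) := by
        rw [hdiag, ← mulVec_mulVec, dotProduct_mulVec, vecMul_transpose]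
    _ = ∑ i, lam i * (u i ⬝ᵥ ψ) ^ 2 :=
        Finset.sum_congr rfl fun i _ => by rw [mulVec_diagonal, sq]; exact mul_left_comm _ _ _

theorem sum_sq_dotProduct_eq (hortho : ∀ i j, u i ⬝ᵥ u j = if i = j then (1 : ℝ) else 0)
    (ψ : n → ℝ) : ∑ i, (u i ⬝ᵥ ψ) ^ 2 = ψ ⬝ᵥ ψ := by
  simpa using (dotProduct_mulVec_eq_sum_mul_sq hortho (A := 1) (lam := 1) (by simp) ψ).symm

end OrthonormalEigenbasis

theorem stmt_10 (d : ℕ) (hd : 2 ≤ d) (A : Matrix (Fin d) (Fin d) ℝ)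
    (u : Fin d → Fin d → ℝ) (lam : Fin d → ℝ)
    (hortho : ∀ i j, u i ⬝ᵥ u j = if i = j then (1 : ℝ) else 0)
    (heig : ∀ i, A.mulVec (u i) = lam i • u i)
    (hmono : Antitone lam)
    (ψ : Fin d → ℝ) (hψ : ψ ⬝ᵥ ψ = 1) :
    (4 / Real.pi ^ 2) * (lam ⟨0, by omega⟩ - lam ⟨1, by omega⟩) *
        Real.arccos |u ⟨0, by omega⟩ ⬝ᵥ ψ| ^ 2 ≤
      lam ⟨0, by omega⟩ - ψ ⬝ᵥ A.mulVec ψ := by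
  set i₀ : Fin d := ⟨0, by omega⟩
  set i₁ : Fin d := ⟨1, by omega⟩
  set c : Fin d → ℝ := fun i => u i ⬝ᵥ ψ
  have hc : ∑ i, c i ^ 2 = 1 := (sum_sq_dotProduct_eq hortho ψ).trans hψ
  have hc₀ : |c i₀| ≤ 1 := sq_le_one_iff_abs_le_one _ |>.mp <|
    hc ▸ Finset.single_le_sum (fun i _ => sq_nonneg (c i)) (Finset.mem_univ i₀)
  have hgap : ∀ i ≠ i₀, lam i ≤ lam i₁ := fun i hi =>
    hmono (Fin.le_def.mpr (Nat.one_le_iff_ne_zero.mpr fun h => hi (Fin.ext h)))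
  calc 4 / π ^ 2 * (lam i₀ - lam i₁) * arccos |c i₀| ^ 2
      = (lam i₀ - lam i₁) * (4 / π ^ 2 * arccos |c i₀| ^ 2) := by ring
    _ ≤ (lam i₀ - lam i₁) * (1 - c i₀ ^ 2) := by
        rw [← sq_abs (c i₀)]
        exact mul_le_mul_of_nonneg_left (four_div_pi_sq_mul_arccos_sq_le (abs_nonneg _) hc₀)
          (sub_nonneg.mpr (hmono (Fin.le_def.mpr zero_le_one)))
    _ ≤ lam i₀ - ∑ i, lam i * c i ^ 2 :=
        sub_mul_one_sub_le_sub_sum_mul (fun i => sq_nonneg (c i)) hc hgap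
    _ = lam i₀ - ψ ⬝ᵥ A *ᵥ ψ := by rw [dotProduct_mulVec_eq_sum_mul_sq hortho heig]
end

section
/- For the eigenvector cost l(φ, (y,z)) = ⟨y,φ⟩² − ⟨y,φ⟩⟨z,φ⟩ on the unit sphere, the quadruple inequality holds: for all unit vectors φ, ψ and all (y,z), (y',z') ∈ R^d × R^d, l(φ,(y,z)) − l(ψ,(y,z)) − l(φ,(y',z')) + l(ψ,(y',z')) ≤ 2(‖y‖² + ‖y'‖² + ‖y‖‖z‖ + ‖y'‖‖z'‖) · arccos⟨φ,ψ⟩. -/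
/-! Each of the two cost differences in the quadruple is Lipschitz in the direction: expanding
`⟪y, φ⟫² - ⟪y, ψ⟫²` and `⟪y, φ⟫⟪z, φ⟫ - ⟪y, ψ⟫⟪z, ψ⟫` around `φ - ψ` and applying Cauchy–Schwarz
bounds `|l(φ, (y, z)) - l(ψ, (y, z))|` by `2 (‖y‖² + ‖y‖‖z‖) ‖φ - ψ‖`. On the unit sphere the chord
`‖φ - ψ‖ = √(2 - 2 cos θ)` is at most the arc `θ = arccos ⟪φ, ψ⟫`, since `cos θ ≥ 1 - θ² / 2`. -/

open scoped RealInnerProductSpace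

variable {F : Type*} [NormedAddCommGroup F] [InnerProductSpace ℝ F]

/-- The eigenvector cost `l(φ, (y, z))`. -/
def eigenCost (φ y z : F) : ℝ := ⟪y, φ⟫ ^ 2 - ⟪y, φ⟫ * ⟪z, φ⟫

lemma abs_real_inner_le_of_norm_le_one (x : F) {φ : F} (hφ : ‖φ‖ ≤ 1) : |⟪x, φ⟫| ≤ ‖x‖ :=
  (abs_real_inner_le_norm x φ).trans (mul_le_of_le_one_right (norm_nonneg x) hφ)

lemma abs_eigenCost_sub_le {φ ψ : F} (hφ : ‖φ‖ ≤ 1) (hψ : ‖ψ‖ ≤ 1) (y z : F) :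
    |eigenCost φ y z - eigenCost ψ y z| ≤ 2 * (‖y‖ ^ 2 + ‖y‖ * ‖z‖) * ‖φ - ψ‖ := by
  have hsum : |⟪y, φ⟫ + ⟪y, ψ⟫ - ⟪z, φ⟫| ≤ 2 * ‖y‖ + ‖z‖ := by
    calc |⟪y, φ⟫ + ⟪y, ψ⟫ - ⟪z, φ⟫| ≤ |⟪y, φ⟫| + |⟪y, ψ⟫| + |⟪z, φ⟫| :=
          (abs_sub _ _).trans (add_le_add_left (abs_add_le _ _) _)
      _ ≤ ‖y‖ + ‖y‖ + ‖z‖ := by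
          gcongr <;> exact abs_real_inner_le_of_norm_le_one _ ‹_›
      _ = 2 * ‖y‖ + ‖z‖ := by ring
  calc |eigenCost φ y z - eigenCost ψ y z|
      = |⟪y, φ - ψ⟫ * (⟪y, φ⟫ + ⟪y, ψ⟫ - ⟪z, φ⟫) - ⟪y, ψ⟫ * ⟪z, φ - ψ⟫| := by
        simp only [eigenCost, inner_sub_right]; ring_nf
    _ ≤ |⟪y, φ - ψ⟫| * |⟪y, φ⟫ + ⟪y, ψ⟫ - ⟪z, φ⟫| + |⟪y, ψ⟫| * |⟪z, φ - ψ⟫| := by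
        rw [← abs_mul, ← abs_mul]; exact abs_sub _ _
    _ ≤ (‖y‖ * ‖φ - ψ‖) * (2 * ‖y‖ + ‖z‖) + ‖y‖ * (‖z‖ * ‖φ - ψ‖) := by
        gcongr
        · exact abs_real_inner_le_norm _ _
        · exact abs_real_inner_le_of_norm_le_one _ hψ
        · exact abs_real_inner_le_norm _ _
    _ = 2 * (‖y‖ ^ 2 + ‖y‖ * ‖z‖) * ‖φ - ψ‖ := by ring

lemma norm_sub_le_arccos_inner {φ ψ : F} (hφ : ‖φ‖ = 1) (hψ : ‖ψ‖ = 1) :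
    ‖φ - ψ‖ ≤ Real.arccos ⟪φ, ψ⟫ := by
  set θ := Real.arccos ⟪φ, ψ⟫
  have hinner : |⟪φ, ψ⟫| ≤ 1 := abs_real_inner_le_of_norm_le_one φ hψ.le |>.trans hφ.le
  have hcos : Real.cos θ = ⟪φ, ψ⟫ := Real.cos_arccos (abs_le.1 hinner).1 (abs_le.1 hinner).2
  have hchord : ‖φ - ψ‖ ^ 2 = 2 - 2 * Real.cos θ := by
    rw [norm_sub_sq_real, hφ, hψ, hcos]; ring
  refine (pow_le_pow_iff_left₀ (norm_nonneg _) (Real.arccos_nonneg _) two_ne_zero).1 ?_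
  linarith [Real.one_sub_sq_div_two_le_cos (x := θ)]

theorem stmt_11 (d : ℕ) (φ ψ y z y' z' : EuclideanSpace ℝ (Fin d))
    (hφ : ‖φ‖ = 1) (hψ : ‖ψ‖ = 1) :
    (⟪y, φ⟫ ^ 2 - ⟪y, φ⟫ * ⟪z, φ⟫) - (⟪y, ψ⟫ ^ 2 - ⟪y, ψ⟫ * ⟪z, ψ⟫)
        - (⟪y', φ⟫ ^ 2 - ⟪y', φ⟫ * ⟪z', φ⟫) + (⟪y', ψ⟫ ^ 2 - ⟪y', ψ⟫ * ⟪z', ψ⟫) ≤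
      2 * (‖y‖ ^ 2 + ‖y'‖ ^ 2 + ‖y‖ * ‖z‖ + ‖y'‖ * ‖z'‖) * Real.arccos ⟪φ, ψ⟫ := by
  change eigenCost φ y z - eigenCost ψ y z - eigenCost φ y' z' + eigenCost ψ y' z' ≤ _
  calc _ = (eigenCost φ y z - eigenCost ψ y z) + -(eigenCost φ y' z' - eigenCost ψ y' z') := by
        ring
    _ ≤ 2 * (‖y‖ ^ 2 + ‖y‖ * ‖z‖) * ‖φ - ψ‖ + 2 * (‖y'‖ ^ 2 + ‖y'‖ * ‖z'‖) * ‖φ - ψ‖ :=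
        add_le_add ((le_abs_self _).trans (abs_eigenCost_sub_le hφ.le hψ.le y z))
          ((neg_le_abs _).trans (abs_eigenCost_sub_le hφ.le hψ.le y' z'))
    _ = 2 * (‖y‖ ^ 2 + ‖y'‖ ^ 2 + ‖y‖ * ‖z‖ + ‖y'‖ * ‖z'‖) * ‖φ - ψ‖ := by ring
    _ ≤ _ := by gcongr; exact norm_sub_le_arccos_inner hφ hψ
end

section
/- For probability measures φ₀, φ₁, ψ₀, ψ₁ on a bounded set Ω ⊂ R^d with φ₀, φ₁ absolutely continuous, the half-squared Wasserstein-2 cost satisfies the quadruple inequality ½W₂²(φ₀,ψ₀) − ½W₂²(φ₁,ψ₀) + ½W₂²(φ₁,ψ₁) − ½W₂²(φ₀,ψ₁) ≤ 4·diam(Ω)² · ‖φ₀ − φ₁‖₁. -/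
open MeasureTheory

/-- The squared 2-Wasserstein distance, defined as the infimum over couplings of the
integral of the squared distance. -/
noncomputable def W2sq {d : ℕ} (φ ψ : Measure (EuclideanSpace ℝ (Fin d))) : ℝ :=
  sInf {r : ℝ |
    ∃ π : Measure (EuclideanSpace ℝ (Fin d) × EuclideanSpace ℝ (Fin d)),
      π.map Prod.fst = φ ∧ π.map Prod.snd = ψ ∧ r = ∫ p, dist p.1 p.2 ^ 2 ∂π}

/-! Everything rests on a one-sided stability estimate: if `φ₀ s ≤ φ₁ s + c` for all measurable
`s`, then `W₂²(φ₀, ψ) ≤ W₂²(φ₁, ψ) + diam(Ω)² c`. Write `φ₀ = μ + ρ₀` and `φ₁ = μ + ρ₁` with a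
common part `μ` and `ρ₀(univ) ≤ c`. A coupling of `(φ₁, ψ)` splits along its first marginal into a
coupling of `μ` and one of `ρ₁`; keeping the first and replacing the second by a product coupling
of `ρ₀` with the same second marginal gives a coupling of `(φ₀, ψ)`, at an extra cost of at most
`diam(Ω)² ρ₀(univ)`. For densities one may take `c = ‖f₀ - f₁‖₁`, and the two estimates with the
roles of `φ₀, φ₁` exchanged add up to the quadruple inequality. -/

open Measure Set
open scoped ENNReal

section Coupling

variable {α β : Type*} [MeasurableSpace α] [MeasurableSpace β]

lemma map_withDensity_comp (π : Measure α) {F : α → β} (hF : Measurable F) {g : β → ℝ≥0∞}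
    (hg : Measurable g) : (π.withDensity (g ∘ F)).map F = (π.map F).withDensity g := by
  ext s hs
  rw [map_apply hF hs, withDensity_apply _ (hF hs), withDensity_apply _ hs,
    setLIntegral_map hs hg hF]
  rfl

lemma isFiniteMeasure_of_map_eq {π : Measure α} {f : α → β} (hf : AEMeasurable f π)
    {μ : Measure β} [IsFiniteMeasure μ] (h : π.map f = μ) : IsFiniteMeasure π :=
  (isFiniteMeasure_map_iff hf).1 (h ▸ inferInstance)

lemma exists_eq_add_of_map_fst_eq_add {π : Measure (α × β)} {μ ρ : Measure α}
    [IsFiniteMeasure μ] [IsFiniteMeasure ρ] (h : π.map Prod.fst = μ + ρ) :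
    ∃ π' π'' : Measure (α × β), π = π' + π'' ∧ π'.map Prod.fst = μ ∧ π''.map Prod.fst = ρ := by
  have hμ : Measurable (μ.rnDeriv (μ + ρ)) := measurable_rnDeriv _ _
  have hρ : Measurable (ρ.rnDeriv (μ + ρ)) := measurable_rnDeriv _ _
  refine ⟨π.withDensity (μ.rnDeriv (μ + ρ) ∘ Prod.fst),
    π.withDensity (ρ.rnDeriv (μ + ρ) ∘ Prod.fst), ?_, ?_, ?_⟩
  · have hsum : ∀ᵐ x ∂π.map Prod.fst, (μ.rnDeriv (μ + ρ) + ρ.rnDeriv (μ + ρ)) x = 1 := by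
      rw [h]
      filter_upwards [rnDeriv_add μ ρ (μ + ρ), rnDeriv_self (μ + ρ)] with x hadd hself
      rw [← hadd, hself]
    rw [← withDensity_add_left (hμ.comp measurable_fst)]
    conv_lhs => rw [← withDensity_one (μ := π)]
    exact withDensity_congr_ae ((ae_of_ae_map measurable_fst.aemeasurable hsum).mono
      fun p hp => hp.symm)
  · rw [map_withDensity_comp _ measurable_fst hμ, h,
      withDensity_rnDeriv_eq _ _ (AbsolutelyContinuous.rfl.add_right ρ)]
  · rw [map_withDensity_comp _ measurable_fst hρ, h,
      withDensity_rnDeriv_eq _ _ (AbsolutelyContinuous.rfl.add_right' μ)]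

lemma exists_map_fst_eq_map_snd_eq {μ : Measure α} {ν : Measure β}
    [IsFiniteMeasure μ] [IsFiniteMeasure ν] (h : μ univ = ν univ) :
    ∃ κ : Measure (α × β), κ.map Prod.fst = μ ∧ κ.map Prod.snd = ν := by
  rcases eq_or_ne (μ univ) 0 with h0 | h0
  · refine ⟨0, ?_, ?_⟩
    · simpa using (measure_univ_eq_zero.mp h0).symm
    · simpa using (measure_univ_eq_zero.mp (h ▸ h0)).symm
  · have hinv : (μ univ)⁻¹ * μ univ = 1 := ENNReal.inv_mul_cancel h0 (measure_ne_top _ _)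
    refine ⟨(μ univ)⁻¹ • μ.prod ν, ?_, ?_⟩
    · rw [Measure.map_smul, map_fst_prod, smul_smul, ← h, hinv, one_smul]
    · rw [Measure.map_smul, map_snd_prod, smul_smul, hinv, one_smul]

lemma exists_eq_add_eq_add_of_le_add {φ₀ φ₁ : Measure α} [IsFiniteMeasure φ₀]
    [IsFiniteMeasure φ₁] {c : ℝ≥0∞} (h : ∀ s, MeasurableSet s → φ₀ s ≤ φ₁ s + c) :
    ∃ μ ρ₀ ρ₁ : Measure α, φ₀ = μ + ρ₀ ∧ φ₁ = μ + ρ₁ ∧ ρ₀ univ ≤ c := by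
  set m := φ₀ + φ₁
  set h₀ := φ₀.rnDeriv m
  set h₁ := φ₁.rnDeriv m
  have hm₀ : Measurable h₀ := measurable_rnDeriv _ _
  have hm₁ : Measurable h₁ := measurable_rnDeriv _ _
  have hd₀ : m.withDensity h₀ = φ₀ := withDensity_rnDeriv_eq _ _ (.add_right .rfl _)
  have hd₁ : m.withDensity h₁ = φ₁ := withDensity_rnDeriv_eq _ _ (.add_right' .rfl _)
  -- `h₀ - h₁` is truncated subtraction: `ρ₀` gets the density `(h₀ - h₁)⁺`.
  refine ⟨m.withDensity fun x => min (h₀ x) (h₁ x), m.withDensity (h₀ - h₁),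
    m.withDensity (h₁ - h₀), ?_, ?_, ?_⟩
  · rw [← withDensity_add_left (hm₀.min hm₁)]
    conv_lhs => rw [← hd₀]
    congr 1
    funext x
    show h₀ x = min (h₀ x) (h₁ x) + (h₀ x - h₁ x)
    rw [add_comm, tsub_add_min]
  · rw [← withDensity_add_left (hm₀.min hm₁)]
    conv_lhs => rw [← hd₁]
    congr 1
    funext x
    show h₁ x = min (h₀ x) (h₁ x) + (h₁ x - h₀ x)
    rw [min_comm, add_comm, tsub_add_min]
  · set A := {x | h₁ x < h₀ x}
    have hA : MeasurableSet A := measurableSet_lt hm₁ hm₀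
    have hsupp : Function.support (h₀ - h₁) ⊆ A := fun x hx =>
      tsub_pos_iff_lt.1 (pos_iff_ne_zero.2 hx)
    calc m.withDensity (h₀ - h₁) univ = ∫⁻ x in A, h₀ x - h₁ x ∂m := by
          rw [withDensity_apply _ .univ, restrict_univ,
            ← setLIntegral_eq_of_support_subset hsupp]
          rfl
      _ = φ₀ A - φ₁ A := by
          have hfin : ∫⁻ x in A, h₁ x ∂m ≠ ∞ := by
            rw [← withDensity_apply _ hA, hd₁]
            exact measure_ne_top _ _
          rw [lintegral_sub hm₁ hfin ((ae_restrict_mem hA).mono fun x hx => le_of_lt hx),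
            ← withDensity_apply _ hA, ← withDensity_apply _ hA, hd₀, hd₁]
      _ ≤ c := tsub_le_iff_left.2 (h A hA)

end Coupling

section Cost

variable {X : Type*} [PseudoMetricSpace X] [MeasurableSpace X] {Ω : Set X} {π : Measure (X × X)}

lemma ae_dist_sq_le_diam_sq (hΩ : Bornology.IsBounded Ω) (h₁ : π.map Prod.fst Ωᶜ = 0)
    (h₂ : π.map Prod.snd Ωᶜ = 0) : ∀ᵐ p ∂π, dist p.1 p.2 ^ 2 ≤ Metric.diam Ω ^ 2 := by
  filter_upwards [ae_of_ae_map measurable_fst.aemeasurable (ae_iff.2 h₁),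
    ae_of_ae_map measurable_snd.aemeasurable (ae_iff.2 h₂)] with p hp₁ hp₂
  exact pow_le_pow_left₀ dist_nonneg (Metric.dist_le_diam_of_mem hΩ hp₁ hp₂) 2

variable [OpensMeasurableSpace X] [SecondCountableTopology X]

lemma integrable_dist_sq [IsFiniteMeasure π] (hΩ : Bornology.IsBounded Ω)
    (h₁ : π.map Prod.fst Ωᶜ = 0) (h₂ : π.map Prod.snd Ωᶜ = 0) :
    Integrable (fun p : X × X => dist p.1 p.2 ^ 2) π :=
  Integrable.of_bound ((continuous_fst.dist continuous_snd).pow 2).aestronglyMeasurable _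
    ((ae_dist_sq_le_diam_sq hΩ h₁ h₂).mono fun p hp => by
      rwa [Real.norm_of_nonneg (sq_nonneg _)])

lemma integral_dist_sq_le [IsFiniteMeasure π] (hΩ : Bornology.IsBounded Ω)
    (h₁ : π.map Prod.fst Ωᶜ = 0) (h₂ : π.map Prod.snd Ωᶜ = 0) :
    ∫ p, dist p.1 p.2 ^ 2 ∂π ≤ Metric.diam Ω ^ 2 * π.real univ := by
  calc ∫ p, dist p.1 p.2 ^ 2 ∂π ≤ ∫ _, Metric.diam Ω ^ 2 ∂π :=
        integral_mono_ae (integrable_dist_sq hΩ h₁ h₂) (integrable_const _)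
          (ae_dist_sq_le_diam_sq hΩ h₁ h₂)
    _ = Metric.diam Ω ^ 2 * π.real univ := by rw [integral_const, smul_eq_mul, mul_comm]

lemma exists_coupling_integral_dist_sq_le (hΩ : Bornology.IsBounded Ω)
    {μ ρ₀ ρ₁ ψ : Measure X} [IsFiniteMeasure μ] [IsFiniteMeasure ρ₀] [IsFiniteMeasure ρ₁]
    (hmass : ρ₀ univ = ρ₁ univ) (h₀Ω : (μ + ρ₀) Ωᶜ = 0) (h₁Ω : (μ + ρ₁) Ωᶜ = 0)
    (hψ : ψ Ωᶜ = 0) (h₁ : π.map Prod.fst = μ + ρ₁) (h₂ : π.map Prod.snd = ψ) :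
    ∃ π₀ : Measure (X × X), π₀.map Prod.fst = μ + ρ₀ ∧ π₀.map Prod.snd = ψ ∧
      ∫ p, dist p.1 p.2 ^ 2 ∂π₀ ≤
        ∫ p, dist p.1 p.2 ^ 2 ∂π + Metric.diam Ω ^ 2 * ρ₀.real univ := by
  obtain ⟨π', π'', rfl, h', h''⟩ := exists_eq_add_of_map_fst_eq_add h₁
  have : IsFiniteMeasure π' := isFiniteMeasure_of_map_eq measurable_fst.aemeasurable h'
  have : IsFiniteMeasure π'' := isFiniteMeasure_of_map_eq measurable_fst.aemeasurable h''
  have hsnd : π'.map Prod.snd + π''.map Prod.snd = ψ := by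
    rw [← Measure.map_add _ _ measurable_snd, h₂]
  have hmass' : ρ₀ univ = π''.map Prod.snd univ := by
    rw [hmass, ← h'', map_apply measurable_fst .univ, map_apply measurable_snd .univ]; rfl
  obtain ⟨κ, hκ₁, hκ₂⟩ := exists_map_fst_eq_map_snd_eq hmass'
  simp only [add_apply, add_eq_zero] at h₀Ω h₁Ω
  rw [← hsnd, add_apply, add_eq_zero] at hψ
  have : IsFiniteMeasure κ := isFiniteMeasure_of_map_eq measurable_fst.aemeasurable hκ₁
  have c' := integrable_dist_sq hΩ (h' ▸ h₁Ω.1) hψ.1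
  have c'' := integrable_dist_sq hΩ (h'' ▸ h₁Ω.2) hψ.2
  have cκ := integrable_dist_sq hΩ (hκ₁ ▸ h₀Ω.2) (hκ₂ ▸ hψ.2)
  refine ⟨π' + κ, by rw [Measure.map_add _ _ measurable_fst, h', hκ₁],
    by rw [Measure.map_add _ _ measurable_snd, hκ₂, hsnd], ?_⟩
  have hκu : κ.real univ = ρ₀.real univ := by
    rw [← hκ₁, map_measureReal_apply measurable_fst .univ]; rfl
  rw [integral_add_measure c' cκ, integral_add_measure c' c'', ← hκu]
  have := integral_dist_sq_le hΩ (hκ₁ ▸ h₀Ω.2) (hκ₂ ▸ hψ.2)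
  have : 0 ≤ ∫ p, dist p.1 p.2 ^ 2 ∂π'' := integral_nonneg fun _ => sq_nonneg _
  linarith

end Cost

section Wasserstein

variable {d : ℕ} {φ ψ : Measure (EuclideanSpace ℝ (Fin d))}

lemma W2sq_le_integral {π : Measure (EuclideanSpace ℝ (Fin d) × EuclideanSpace ℝ (Fin d))}
    (h₁ : π.map Prod.fst = φ) (h₂ : π.map Prod.snd = ψ) :
    W2sq φ ψ ≤ ∫ p, dist p.1 p.2 ^ 2 ∂π :=
  csInf_le ⟨0, by rintro _ ⟨π, -, -, rfl⟩; exact integral_nonneg fun _ => sq_nonneg _⟩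
    ⟨π, h₁, h₂, rfl⟩

lemma le_W2sq [IsFiniteMeasure φ] [IsFiniteMeasure ψ] (hmass : φ univ = ψ univ) {a : ℝ}
    (h : ∀ π : Measure (EuclideanSpace ℝ (Fin d) × EuclideanSpace ℝ (Fin d)),
      π.map Prod.fst = φ → π.map Prod.snd = ψ → a ≤ ∫ p, dist p.1 p.2 ^ 2 ∂π) :
    a ≤ W2sq φ ψ := by
  obtain ⟨κ, h₁, h₂⟩ := exists_map_fst_eq_map_snd_eq hmass
  exact le_csInf ⟨_, κ, h₁, h₂, rfl⟩ fun _ ⟨π, h₁, h₂, hr⟩ => hr ▸ h π h₁ h₂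

end Wasserstein

lemma withDensity_ofReal_apply_le_add {α : Type*} [MeasurableSpace α] {m : Measure α}
    {f g : α → ℝ} (hfg : Integrable (fun x => |f x - g x|) m) {s : Set α}
    (hs : MeasurableSet s) :
    m.withDensity (fun x => ENNReal.ofReal (f x)) s ≤
      m.withDensity (fun x => ENNReal.ofReal (g x)) s +
        ENNReal.ofReal (∫ x, |f x - g x| ∂m) := by
  have hpt : ∀ x, ENNReal.ofReal (f x) ≤ ENNReal.ofReal (g x) + ENNReal.ofReal |f x - g x| :=
    fun x => (ENNReal.ofReal_le_ofReal (by linarith [le_abs_self (f x - g x)])).trans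
      ENNReal.ofReal_add_le
  rw [withDensity_apply _ hs, withDensity_apply _ hs,
    ofReal_integral_eq_lintegral_ofReal hfg (ae_of_all _ fun _ => abs_nonneg _)]
  calc ∫⁻ x in s, ENNReal.ofReal (f x) ∂m
      ≤ ∫⁻ x in s, ENNReal.ofReal (g x) + ENNReal.ofReal |f x - g x| ∂m := lintegral_mono hpt
    _ = ∫⁻ x in s, ENNReal.ofReal (g x) ∂m + ∫⁻ x in s, ENNReal.ofReal |f x - g x| ∂m :=
        lintegral_add_right' _ hfg.aemeasurable.ennreal_ofReal.restrict
    _ ≤ _ := by gcongr; exact restrict_le_self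

lemma W2sq_le_W2sq_add {d : ℕ} {Ω : Set (EuclideanSpace ℝ (Fin d))}
    (hΩ : Bornology.IsBounded Ω)
    {φ₀ φ₁ ψ : Measure (EuclideanSpace ℝ (Fin d))} [IsProbabilityMeasure φ₀]
    [IsProbabilityMeasure φ₁] [IsProbabilityMeasure ψ]
    (hφ₀ : φ₀ Ωᶜ = 0) (hφ₁ : φ₁ Ωᶜ = 0) (hψ : ψ Ωᶜ = 0) {c : ℝ} (hc : 0 ≤ c)
    (h : ∀ s, MeasurableSet s → φ₀ s ≤ φ₁ s + ENNReal.ofReal c) :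
    W2sq φ₀ ψ ≤ W2sq φ₁ ψ + Metric.diam Ω ^ 2 * c := by
  obtain ⟨μ, ρ₀, ρ₁, rfl, rfl, hρ₀⟩ := exists_eq_add_eq_add_of_le_add h
  have : IsFiniteMeasure μ := isFiniteMeasure_of_le (μ + ρ₀) (Measure.le_add_right le_rfl)
  have : IsFiniteMeasure ρ₀ := isFiniteMeasure_of_le (μ + ρ₀) (Measure.le_add_left le_rfl)
  have : IsFiniteMeasure ρ₁ := isFiniteMeasure_of_le (μ + ρ₁) (Measure.le_add_left le_rfl)
  have hmass : ρ₀ univ = ρ₁ univ := by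
    have h₀₁ : (μ + ρ₀) univ = (μ + ρ₁) univ := by simp
    rwa [Measure.add_apply, Measure.add_apply, ENNReal.add_right_inj (measure_ne_top μ univ)] at h₀₁
  have hρ₀c : ρ₀.real univ ≤ c := ENNReal.toReal_le_of_le_ofReal hc hρ₀
  rw [← _root_.sub_le_iff_le_add]
  refine le_W2sq (by simp) fun π₁ h₁ h₂ => ?_
  obtain ⟨π₀, h₀₁, h₀₂, hcost⟩ :=
    exists_coupling_integral_dist_sq_le hΩ hmass hφ₀ hφ₁ hψ h₁ h₂
  calc W2sq (μ + ρ₀) ψ - Metric.diam Ω ^ 2 * c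
      ≤ ∫ p, dist p.1 p.2 ^ 2 ∂π₀ - Metric.diam Ω ^ 2 * ρ₀.real univ := by
        gcongr
        exact W2sq_le_integral h₀₁ h₀₂
    _ ≤ ∫ p, dist p.1 p.2 ^ 2 ∂π₁ := by linarith

theorem stmt_14_general (d : ℕ) (Ω : Set (EuclideanSpace ℝ (Fin d)))
    (hΩ : Bornology.IsBounded Ω) (hmeas : MeasurableSet Ω)
    (φ₀ φ₁ ψ₀ ψ₁ : Measure (EuclideanSpace ℝ (Fin d)))
    [IsProbabilityMeasure φ₀] [IsProbabilityMeasure φ₁]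
    [IsProbabilityMeasure ψ₀] [IsProbabilityMeasure ψ₁]
    (hψ₀ : ψ₀ Ωᶜ = 0) (hψ₁ : ψ₁ Ωᶜ = 0)
    (f₀ f₁ : EuclideanSpace ℝ (Fin d) → ℝ)
    (hf₀ : φ₀ = (volume.restrict Ω).withDensity fun x => ENNReal.ofReal (f₀ x))
    (hf₁ : φ₁ = (volume.restrict Ω).withDensity fun x => ENNReal.ofReal (f₁ x))
    (hint : IntegrableOn (fun x => |f₀ x - f₁ x|) Ω volume) :
    W2sq φ₀ ψ₀ / 2 - W2sq φ₁ ψ₀ / 2 + W2sq φ₁ ψ₁ / 2 - W2sq φ₀ ψ₁ / 2 ≤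
      4 * Metric.diam Ω ^ 2 * ∫ x in Ω, |f₀ x - f₁ x| := by
  have hI : 0 ≤ ∫ x in Ω, |f₀ x - f₁ x| := integral_nonneg fun _ => abs_nonneg _
  have hΩc : volume.restrict Ω Ωᶜ = 0 := by simp [restrict_apply hmeas.compl]
  have hφ₀ : φ₀ Ωᶜ = 0 := hf₀ ▸ withDensity_absolutelyContinuous _ _ hΩc
  have hφ₁ : φ₁ Ωᶜ = 0 := hf₁ ▸ withDensity_absolutelyContinuous _ _ hΩc
  have hsymm : (fun x => |f₁ x - f₀ x|) = fun x => |f₀ x - f₁ x| :=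
    funext fun x => abs_sub_comm _ _
  have h₀₁ := W2sq_le_W2sq_add hΩ hφ₀ hφ₁ hψ₀ hI fun s hs =>
    hf₀ ▸ hf₁ ▸ withDensity_ofReal_apply_le_add hint hs
  have h₁₀ := W2sq_le_W2sq_add hΩ hφ₁ hφ₀ hψ₁ hI fun s hs => by
    have := withDensity_ofReal_apply_le_add (hsymm ▸ hint) hs
    rwa [hsymm, ← hf₀, ← hf₁] at this
  linarith [mul_nonneg (sq_nonneg (Metric.diam Ω)) hI]

theorem stmt_14 (d : ℕ) (Ω : Set (EuclideanSpace ℝ (Fin d)))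
    (hΩ : Bornology.IsBounded Ω) (hmeas : MeasurableSet Ω)
    (φ₀ φ₁ ψ₀ ψ₁ : Measure (EuclideanSpace ℝ (Fin d)))
    [IsProbabilityMeasure φ₀] [IsProbabilityMeasure φ₁]
    [IsProbabilityMeasure ψ₀] [IsProbabilityMeasure ψ₁]
    (hψ₀ : ψ₀ Ωᶜ = 0) (hψ₁ : ψ₁ Ωᶜ = 0)
    (f₀ f₁ : EuclideanSpace ℝ (Fin d) → ℝ)
    (hf₀nn : ∀ x, 0 ≤ f₀ x) (hf₁nn : ∀ x, 0 ≤ f₁ x)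
    (hf₀ : φ₀ = (volume.restrict Ω).withDensity fun x => ENNReal.ofReal (f₀ x))
    (hf₁ : φ₁ = (volume.restrict Ω).withDensity fun x => ENNReal.ofReal (f₁ x))
    (hint : IntegrableOn (fun x => |f₀ x - f₁ x|) Ω volume) :
    W2sq φ₀ ψ₀ / 2 - W2sq φ₁ ψ₀ / 2 + W2sq φ₁ ψ₁ / 2 - W2sq φ₀ ψ₁ / 2 ≤
      4 * Metric.diam Ω ^ 2 * ∫ x in Ω, |f₀ x - f₁ x| :=
  stmt_14_general d Ω hΩ hmeas φ₀ φ₁ ψ₀ ψ₁ hψ₀ hψ₁ f₀ f₁ hf₀ hf₁ hint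
end
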